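/- Fix c > 0 and suppose that (w_r · P̂[t])² ≤ c for every rank r = 1,…,R and every time t = 1,…,τ. Then exp( −L_u(τ)/(2c) ) ≥ (1/R) Σ_{r=1}^{R} exp( −ℓ_r(τ)/(2c) ). In particular, the exponentiated cumulative loss of the universal filter dominates the uniform average of the exponentiated cumulative losses of the fixed-rank filters (p_u(P̂^τ) ≥ p_avg(P̂^τ)). -/

import Mathlib

/-- Euclidean inner product on `ℝ^R`. -/
noncomputable def dotp {R : ℕ} (w v : Fin R → ℝ) : ℝ := ∑ i, w i * v i

/-- Cumulative loss `ℓ_r(t) = Σ_{t'=1}^{t} (w_r · P̂[t'])²` (so `ℓ_r(0) = 0`). -/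
noncomputable def cumLoss {R : ℕ} (w : Fin R → Fin R → ℝ) (P : ℕ → Fin R → ℝ)
    (r : Fin R) (t : ℕ) : ℝ :=
  ∑ t' ∈ Finset.Icc 1 t, (dotp (w r) (P t')) ^ 2

/-- Blending weights `μ_r(t) = exp(−ℓ_r(t−1)/(2c)) / Σ_k exp(−ℓ_k(t−1)/(2c))`. -/
noncomputable def blendWeight {R : ℕ} (c : ℝ) (w : Fin R → Fin R → ℝ)
    (P : ℕ → Fin R → ℝ) (r : Fin R) (t : ℕ) : ℝ :=
  Real.exp (-cumLoss w P r (t - 1) / (2 * c)) /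
    ∑ k, Real.exp (-cumLoss w P k (t - 1) / (2 * c))

/-- Universal weight vector `w_u[t] = Σ_r μ_r(t) w_r`. -/
noncomputable def univWeight {R : ℕ} (c : ℝ) (w : Fin R → Fin R → ℝ)
    (P : ℕ → Fin R → ℝ) (t : ℕ) : Fin R → ℝ :=
  ∑ r, blendWeight c w P r t • w r

/-- Universal cumulative loss `L_u(τ) = Σ_{t=1}^{τ} (w_u[t] · P̂[t])²`. -/
noncomputable def univLoss {R : ℕ} (c : ℝ) (w : Fin R → Fin R → ℝ)
    (P : ℕ → Fin R → ℝ) (τ : ℕ) : ℝ :=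
  ∑ t ∈ Finset.Icc 1 τ, (dotp (univWeight c w P t) (P t)) ^ 2

/-!
Exponential weighting turns the potential `W_t = Σ_r exp(-ℓ_r(t)/(2c))` into a product:
`W_{t+1} = W_t · Σ_r μ_r(t+1) exp(-x_r²/(2c))` with `x_r = w_r · P̂[t+1]`. Since
`x ↦ exp(-x²/(2c))` is concave on `[-√c, √c]`, Jensen's inequality bounds the average by
`exp(-(Σ_r μ_r x_r)²/(2c))`, whose exponent is the universal filter's loss at time `t+1`.
Telescoping gives `W_τ ≤ W_0 · exp(-L_u(τ)/(2c))` with `W_0 = R`.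
-/

open Finset Real

theorem concaveOn_exp_neg_sq_div {c : ℝ} (hc : 0 < c) :
    ConcaveOn ℝ (Set.Icc (-√c) √c) fun x => exp (-x ^ 2 / (2 * c)) := by
  have hexponent (x : ℝ) : HasDerivAt (fun x => -x ^ 2 / (2 * c)) (-x / c) x := by
    refine ((hasDerivAt_pow 2 x).neg.div_const (2 * c)).congr_deriv ?_
    field_simp
    ring
  have hderiv (x : ℝ) : HasDerivAt (fun x => exp (-x ^ 2 / (2 * c)) * (-x / c))
      (exp (-x ^ 2 / (2 * c)) * ((x ^ 2 - c) / c ^ 2)) x := by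
    refine ((hexponent x).exp.mul ((hasDerivAt_neg x).div_const c)).congr_deriv ?_
    field_simp
    ring
  refine concaveOn_of_hasDerivWithinAt2_nonpos (convex_Icc _ _) (by fun_prop)
    (fun x _ => (hexponent x).exp.hasDerivWithinAt) (fun x _ => (hderiv x).hasDerivWithinAt)
    fun x hx => ?_
  rw [interior_Icc] at hx
  have hx_sq : x ^ 2 ≤ c := (Real.sq_le hc.le).2 ⟨hx.1.le, hx.2.le⟩
  exact mul_nonpos_of_nonneg_of_nonpos (exp_pos _).le
    (div_nonpos_of_nonpos_of_nonneg (by linarith) (by positivity))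

theorem sum_mul_exp_neg_sq_le {ι : Type*} {s : Finset ι} {μ x : ι → ℝ} {c : ℝ} (hc : 0 < c)
    (hμ_nonneg : ∀ i ∈ s, 0 ≤ μ i) (hμ_sum : ∑ i ∈ s, μ i = 1) (hx : ∀ i ∈ s, x i ^ 2 ≤ c) :
    ∑ i ∈ s, μ i * exp (-x i ^ 2 / (2 * c)) ≤ exp (-(∑ i ∈ s, μ i * x i) ^ 2 / (2 * c)) :=
  (concaveOn_exp_neg_sq_div hc).le_map_sum hμ_nonneg hμ_sum fun i hi =>
    (Real.sq_le hc.le).1 (hx i hi)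

section UniversalFilter

variable {R : ℕ} (c : ℝ) (w : Fin R → Fin R → ℝ) (P : ℕ → Fin R → ℝ)

theorem cumLoss_succ (r : Fin R) (n : ℕ) :
    cumLoss w P r (n + 1) = cumLoss w P r n + dotp (w r) (P (n + 1)) ^ 2 :=
  sum_Icc_succ_top (Nat.le_add_left 1 n) _

theorem univLoss_succ (n : ℕ) :
    univLoss c w P (n + 1) = univLoss c w P n + dotp (univWeight c w P (n + 1)) (P (n + 1)) ^ 2 :=
  sum_Icc_succ_top (Nat.le_add_left 1 n) _

theorem dotp_univWeight (t : ℕ) (v : Fin R → ℝ) :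
    dotp (univWeight c w P t) v = ∑ r, blendWeight c w P r t * dotp (w r) v := by
  simp only [univWeight, dotp, Finset.sum_apply, Pi.smul_apply, smul_eq_mul, sum_mul, mul_sum]
  rw [sum_comm]
  exact sum_congr rfl fun r _ => sum_congr rfl fun i _ => by ring

theorem blendWeight_nonneg (r : Fin R) (t : ℕ) : 0 ≤ blendWeight c w P r t :=
  div_nonneg (exp_pos _).le (sum_nonneg fun _ _ => (exp_pos _).le)

theorem sum_blendWeight [NeZero R] (t : ℕ) : ∑ r, blendWeight c w P r t = 1 := by
  simp only [blendWeight]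
  rw [← sum_div]
  exact div_self (sum_pos (fun _ _ => exp_pos _) univ_nonempty).ne'

theorem sum_exp_cumLoss_succ (n : ℕ) :
    ∑ r, exp (-cumLoss w P r (n + 1) / (2 * c)) =
      (∑ r, exp (-cumLoss w P r n / (2 * c))) *
        ∑ r, blendWeight c w P r (n + 1) * exp (-dotp (w r) (P (n + 1)) ^ 2 / (2 * c)) := by
  rw [mul_sum]
  refine sum_congr rfl fun r _ => ?_
  have hpos : 0 < ∑ k, exp (-cumLoss w P k n / (2 * c)) :=
    sum_pos (fun _ _ => exp_pos _) ⟨r, mem_univ r⟩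
  rw [cumLoss_succ, neg_add, add_div, exp_add, blendWeight, Nat.add_sub_cancel, ← mul_assoc,
    mul_div_cancel₀ _ hpos.ne']

theorem sum_exp_cumLoss_succ_le [NeZero R] (hc : 0 < c) (n : ℕ)
    (hbound : ∀ r, dotp (w r) (P (n + 1)) ^ 2 ≤ c) :
    ∑ r, exp (-cumLoss w P r (n + 1) / (2 * c)) ≤
      (∑ r, exp (-cumLoss w P r n / (2 * c))) *
        exp (-dotp (univWeight c w P (n + 1)) (P (n + 1)) ^ 2 / (2 * c)) := by
  rw [sum_exp_cumLoss_succ, dotp_univWeight]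
  exact mul_le_mul_of_nonneg_left
    (sum_mul_exp_neg_sq_le hc (fun r _ => blendWeight_nonneg c w P r _) (sum_blendWeight c w P _)
      fun r _ => hbound r)
    (sum_nonneg fun r _ => (exp_pos _).le)

end UniversalFilter

/-- Central step of the appendix proof of Theorem 1: the exponentiated cumulative loss of
the universal filter dominates the uniform average of the exponentiated cumulative losses
of the fixed-rank filters, `p_u(P̂^τ) ≥ p_avg(P̂^τ)`. -/
theorem universalOSF_exp_loss_ge {R : ℕ} (hR : 1 ≤ R) (c : ℝ) (hc : 0 < c)
    (w : Fin R → Fin R → ℝ) (P : ℕ → Fin R → ℝ) (τ : ℕ)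
    (hbound : ∀ r : Fin R, ∀ t ∈ Finset.Icc 1 τ, (dotp (w r) (P t)) ^ 2 ≤ c) :
    (1 / (R : ℝ)) * ∑ r : Fin R, Real.exp (-cumLoss w P r τ / (2 * c)) ≤
      Real.exp (-univLoss c w P τ / (2 * c)) := by
  have : NeZero R := ⟨by omega⟩
  induction τ with
  | zero => simp [cumLoss, univLoss]
  | succ n ih =>
    have ih := ih fun r t ht => hbound r t (Icc_subset_Icc_right n.le_succ ht)
    have hstep := sum_exp_cumLoss_succ_le c w P hc n fun r =>
      hbound r (n + 1) (right_mem_Icc.2 (Nat.le_add_left 1 n))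
    calc 1 / (R : ℝ) * ∑ r, exp (-cumLoss w P r (n + 1) / (2 * c))
        ≤ (1 / R * ∑ r, exp (-cumLoss w P r n / (2 * c))) *
            exp (-dotp (univWeight c w P (n + 1)) (P (n + 1)) ^ 2 / (2 * c)) := by
          rw [mul_assoc]
          exact mul_le_mul_of_nonneg_left hstep (by positivity)
      _ ≤ exp (-univLoss c w P n / (2 * c)) *
            exp (-dotp (univWeight c w P (n + 1)) (P (n + 1)) ^ 2 / (2 * c)) :=
          mul_le_mul_of_nonneg_right ih (exp_pos _).le
      _ = exp (-univLoss c w P (n + 1) / (2 * c)) := by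
          rw [univLoss_succ, neg_add, add_div, exp_add]
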